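/- Suppose τ, σ, σ/τ ∈ H. Then the elliptic gamma function satisfies the three-term relation Γ(z, τ, σ) = Γ(z+τ, τ, σ+τ) · Γ(z, τ+σ, σ) for all z ∈ ℂ for which all factors in the defining products are nonzero. -/

import Mathlib

open Complex Filter Topology

/-- The open upper half-plane as a subset of `ℂ`. -/
def UHP : Set ℂ := {z : ℂ | 0 < z.im}

/-- `qexp τ = e^{2πiτ}`. -/
noncomputable def qexp (τ : ℂ) : ℂ := Complex.exp (2 * Real.pi * Complex.I * τ)

/-- Elliptic zeta values `Z_k(τ,σ)`. -/
noncomputable def ellipticZeta (k : ℕ) (τ σ : ℂ) : ℂ :=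
  -((2 * (Real.pi : ℂ) * Complex.I) ^ k / (Nat.factorial (k - 1) : ℂ)) *
    ∑' j : ℕ+, (j : ℂ) ^ (k - 1) *
      (qexp τ ^ (j : ℕ) - (-1 : ℂ) ^ k * qexp σ ^ (j : ℕ)) /
      ((1 - qexp τ ^ (j : ℕ)) * (1 - qexp σ ^ (j : ℕ)))

/-- `D_k(q)`: the normalized generating function of sums of `(k-1)`-st powers of divisors. -/
noncomputable def Dk (k : ℕ) (q : ℂ) : ℂ :=
  ((-2 * (Real.pi : ℂ) * Complex.I) ^ k / (Nat.factorial (k - 1) : ℂ)) *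
    ∑' n : ℕ+, (∑ d ∈ Nat.divisors (n : ℕ), (d : ℂ) ^ (k - 1)) * q ^ (n : ℕ)

/-- Ruijsenaars's elliptic gamma function. -/
noncomputable def ellipticGamma (z τ σ : ℂ) : ℂ :=
  ∏' p : ℕ × ℕ,
    (1 - qexp τ ^ (p.1 + 1) * qexp σ ^ (p.2 + 1) * Complex.exp (-(2 * Real.pi * Complex.I) * z)) /
    (1 - qexp τ ^ p.1 * qexp σ ^ p.2 * Complex.exp (2 * Real.pi * Complex.I * z))

/-- The modified theta function `θ₀(z,τ)`. -/
noncomputable def theta0 (z τ : ℂ) : ℂ :=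
  ∏' j : ℕ, (1 - qexp τ ^ (j + 1) * Complex.exp (-(2 * Real.pi * Complex.I) * z)) *
            (1 - qexp τ ^ j * Complex.exp (2 * Real.pi * Complex.I * z))

/-- A modular form of weight `k` for `SL(2,ℤ)`: a holomorphic function on the
upper half-plane transforming with weight `k` under `SL(2,ℤ)` and bounded as `Im τ → ∞`. -/
def IsModularForm (k : ℕ) (G : ℂ → ℂ) : Prop :=
  DifferentiableOn ℂ G UHP ∧
  (∀ A : Matrix.SpecialLinearGroup (Fin 2) ℤ, ∀ τ ∈ UHP,
      G (((A 0 0 : ℤ) * τ + (A 0 1 : ℤ)) / ((A 1 0 : ℤ) * τ + (A 1 1 : ℤ))) =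
        ((A 1 0 : ℤ) * τ + (A 1 1 : ℤ)) ^ k * G τ) ∧
  (∃ C : ℝ, ∀ τ ∈ UHP, 1 ≤ τ.im → ‖G τ‖ ≤ C)

/-- All factors in the defining double product of the elliptic gamma function are nonzero. -/
def EGFactorsNeZero (z τ σ : ℂ) : Prop :=
  ∀ j ℓ : ℕ,
    (1 - qexp τ ^ (j + 1) * qexp σ ^ (ℓ + 1) * Complex.exp (-(2 * Real.pi * Complex.I) * z)) ≠ 0 ∧
    (1 - qexp τ ^ j * qexp σ ^ ℓ * Complex.exp (2 * Real.pi * Complex.I * z)) ≠ 0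


/-!
Both kinds of factor in the product defining `Γ(z, τ, σ)` have the form
`1 - e^{2πi(jτ + ℓσ + w)}`, with `w = τ + σ - z` in the numerator and `w = z` in the denominator.
Replacing `(τ, σ, w)` by `(τ, σ + τ, w + kτ)` turns the factor `(j, ℓ)` into the old factor
`(j + ℓ + k, ℓ)`, and replacing it by `(τ + σ, σ, w + kσ)` turns it into `(j, j + ℓ + k)`. These
reindexings are bijections onto `{ℓ + k ≤ j}` and `{j + k ≤ ℓ}`, which partition `ℕ × ℕ` when the
two shifts add up to `1`. On the right-hand side the two numerators are such shifts with `k = 0, 1`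
and the two denominators with `k = 1, 0`; all products converge absolutely, so they may be
regrouped.
-/

open Set Function

section NormedField

variable {ι α β K : Type*} [NormedField K] [CompleteSpace K]

theorem multipliable_of_summable_norm_sub_one {f : ι → K} (hf : Summable fun i => ‖f i - 1‖) :
    Multipliable f := by
  simpa using multipliable_one_add_of_summable (f := fun i => f i - 1) hf

theorem tprod_ne_zero_of_summable_norm_sub_one {f : ι → K}
    (hf : Summable fun i => ‖f i - 1‖) (h0 : ∀ i, f i ≠ 0) : ∏' i, f i ≠ 0 := by
  simpa using tprod_one_add_ne_zero_of_summable (f := fun i => f i - 1) (by simpa using h0) hf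

theorem tprod_div_of_summable_norm_sub_one {f g : ι → K} (hf : Summable fun i => ‖f i - 1‖)
    (hg : Summable fun i => ‖g i - 1‖) (hg0 : ∀ i, g i ≠ 0) :
    ∏' i, f i / g i = (∏' i, f i) / ∏' i, g i :=
  (multipliable_of_summable_norm_sub_one hf).tprod_div₀
    (multipliable_of_summable_norm_sub_one hg) (tprod_ne_zero_of_summable_norm_sub_one hg hg0)

theorem tprod_comp_mul_tprod_comp_of_range_eq_compl {f : β → K}
    (hf : Summable fun b => ‖f b - 1‖) {e₁ : ι → β} {e₂ : α → β} (he₁ : Injective e₁)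
    (he₂ : Injective e₂) (h : range e₂ = (range e₁)ᶜ) :
    (∏' i, f (e₁ i)) * ∏' a, f (e₂ a) = ∏' b, f b := by
  rw [← tprod_range f he₁, ← tprod_range f he₂, h]
  exact Multipliable.tprod_mul_tprod_compl
    (multipliable_of_summable_norm_sub_one (hf.subtype _))
    (multipliable_of_summable_norm_sub_one (hf.subtype _))

end NormedField

theorem add_mem_UHP {a b : ℂ} (ha : a ∈ UHP) (hb : b ∈ UHP) : a + b ∈ UHP := by
  show 0 < (a + b).im
  rw [Complex.add_im]
  exact add_pos ha hb

theorem qexp_add (a b : ℂ) : qexp (a + b) = qexp a * qexp b := by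
  rw [qexp, qexp, qexp, mul_add, Complex.exp_add]

theorem qexp_nat_mul (n : ℕ) (a : ℂ) : qexp (n * a) = qexp a ^ n := by
  rw [qexp, qexp, ← Complex.exp_nat_mul]
  ring_nf

theorem norm_qexp_lt_one {τ : ℂ} (hτ : τ ∈ UHP) : ‖qexp τ‖ < 1 :=
  UpperHalfPlane.norm_exp_two_pi_I_lt_one ⟨τ, hτ⟩

theorem summable_norm_qexp_nat_mul_add_nat_mul {τ σ : ℂ} (hτ : τ ∈ UHP) (hσ : σ ∈ UHP) (w : ℂ) :
    Summable fun p : ℕ × ℕ => ‖qexp (p.1 * τ + p.2 * σ + w)‖ := by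
  have hgeom : Summable fun p : ℕ × ℕ => ‖qexp τ‖ ^ p.1 * ‖qexp σ‖ ^ p.2 :=
    (summable_geometric_of_lt_one (norm_nonneg _) (norm_qexp_lt_one hτ)).mul_of_nonneg
      (summable_geometric_of_lt_one (norm_nonneg _) (norm_qexp_lt_one hσ))
      (fun _ => by positivity) (fun _ => by positivity)
  refine (hgeom.mul_right ‖qexp w‖).congr fun p => ?_
  rw [qexp_add, qexp_add, qexp_nat_mul, qexp_nat_mul, norm_mul, norm_mul, norm_pow, norm_pow]

namespace EllipticGamma

noncomputable def factor (τ σ w : ℂ) (p : ℕ × ℕ) : ℂ :=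
  1 - qexp (p.1 * τ + p.2 * σ + w)

def belowDiagonal (k : ℕ) (p : ℕ × ℕ) : ℕ × ℕ := (p.1 + p.2 + k, p.2)

def aboveDiagonal (k : ℕ) (p : ℕ × ℕ) : ℕ × ℕ := (p.1, p.1 + p.2 + k)

theorem belowDiagonal_injective (k : ℕ) : Injective (belowDiagonal k) := by
  intro p p' h
  simp only [belowDiagonal, Prod.ext_iff] at h ⊢
  omega

theorem aboveDiagonal_injective (k : ℕ) : Injective (aboveDiagonal k) := by
  intro p p' h
  simp only [aboveDiagonal, Prod.ext_iff] at h ⊢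
  omega

theorem range_belowDiagonal (k : ℕ) : range (belowDiagonal k) = {p | p.2 + k ≤ p.1} := by
  ext ⟨a, b⟩
  simp only [mem_range, belowDiagonal, Prod.mk.injEq, Prod.exists, mem_ofPred]
  constructor
  · rintro ⟨j, l, rfl, rfl⟩
    omega
  · exact fun h => ⟨a - b - k, b, by omega, rfl⟩

theorem range_aboveDiagonal (k : ℕ) : range (aboveDiagonal k) = {p | p.1 + k ≤ p.2} := by
  ext ⟨a, b⟩
  simp only [mem_range, aboveDiagonal, Prod.mk.injEq, Prod.exists, mem_ofPred]
  constructor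
  · rintro ⟨j, l, rfl, rfl⟩
    omega
  · exact fun h => ⟨a, b - a - k, rfl, by omega⟩

theorem range_aboveDiagonal_eq_compl {k l : ℕ} (h : k + l = 1) :
    range (aboveDiagonal l) = (range (belowDiagonal k))ᶜ := by
  rw [range_aboveDiagonal, range_belowDiagonal]
  ext p
  simp only [mem_ofPred, mem_compl_iff]
  omega

theorem factor_add_right (τ σ w : ℂ) (k : ℕ) (p : ℕ × ℕ) :
    factor τ (σ + τ) (w + k * τ) p = factor τ σ w (belowDiagonal k p) := by
  simp only [factor, belowDiagonal]
  push_cast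
  ring_nf

theorem factor_add_left (τ σ w : ℂ) (k : ℕ) (p : ℕ × ℕ) :
    factor (τ + σ) σ (w + k * σ) p = factor τ σ w (aboveDiagonal k p) := by
  simp only [factor, aboveDiagonal]
  push_cast
  ring_nf

theorem factor_eq_one_sub_pow_mul_pow (τ σ w : ℂ) (p : ℕ × ℕ) :
    factor τ σ w p = 1 - qexp τ ^ p.1 * qexp σ ^ p.2 * qexp w := by
  rw [factor, qexp_add, qexp_add, qexp_nat_mul, qexp_nat_mul]

theorem summable_norm_factor_sub_one {τ σ : ℂ} (hτ : τ ∈ UHP) (hσ : σ ∈ UHP) (w : ℂ) :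
    Summable fun p => ‖factor τ σ w p - 1‖ :=
  (summable_norm_qexp_nat_mul_add_nat_mul hτ hσ w).congr fun p => by
    rw [factor, sub_sub_cancel_left, norm_neg]

theorem tprod_factor_mul_tprod_factor {τ σ : ℂ} (hτ : τ ∈ UHP) (hσ : σ ∈ UHP) (w : ℂ)
    {k l : ℕ} (hkl : k + l = 1) :
    (∏' p, factor τ (σ + τ) (w + k * τ) p) * ∏' p, factor (τ + σ) σ (w + l * σ) p =
      ∏' p, factor τ σ w p := by
  simp only [factor_add_right, factor_add_left]
  exact tprod_comp_mul_tprod_comp_of_range_eq_compl (summable_norm_factor_sub_one hτ hσ w)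
    (belowDiagonal_injective k) (aboveDiagonal_injective l) (range_aboveDiagonal_eq_compl hkl)

theorem _root_.ellipticGamma_eq_tprod_div_tprod {z τ σ : ℂ} (hτ : τ ∈ UHP) (hσ : σ ∈ UHP)
    (h : EGFactorsNeZero z τ σ) :
    ellipticGamma z τ σ = (∏' p, factor τ σ (τ + σ - z) p) / ∏' p, factor τ σ z p := by
  rw [← tprod_div_of_summable_norm_sub_one (summable_norm_factor_sub_one hτ hσ _)
    (summable_norm_factor_sub_one hτ hσ z)
    fun p => by rw [factor_eq_one_sub_pow_mul_pow]; exact (h p.1 p.2).2]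
  refine tprod_congr fun p => ?_
  simp only [factor, qexp, ← Complex.exp_nat_mul, ← Complex.exp_add]
  congr 3 <;> push_cast <;> ring

end EllipticGamma

theorem ellipticGamma_three_term_general
    (τ σ : ℂ) (hτ : τ ∈ UHP) (hσ : σ ∈ UHP) (z : ℂ)
    (h1 : EGFactorsNeZero z τ σ) (h2 : EGFactorsNeZero (z + τ) τ (σ + τ))
    (h3 : EGFactorsNeZero z (τ + σ) σ) :
    ellipticGamma z τ σ = ellipticGamma (z + τ) τ (σ + τ) * ellipticGamma z (τ + σ) σ := by
  rw [ellipticGamma_eq_tprod_div_tprod hτ hσ h1,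
    ellipticGamma_eq_tprod_div_tprod hτ (add_mem_UHP hσ hτ) h2,
    ellipticGamma_eq_tprod_div_tprod (add_mem_UHP hτ hσ) hσ h3, div_mul_div_comm]
  congr 1
  · convert (EllipticGamma.tprod_factor_mul_tprod_factor hτ hσ (τ + σ - z)
      (k := 0) (l := 1) rfl).symm using 5 <;> push_cast <;> ring
  · convert (EllipticGamma.tprod_factor_mul_tprod_factor hτ hσ z
      (k := 1) (l := 0) rfl).symm using 5 <;> push_cast <;> ring

/-- first three-term relation for the elliptic gamma function. -/
theorem ellipticGamma_three_term
    (τ σ : ℂ) (hτ : τ ∈ UHP) (hσ : σ ∈ UHP) (hστ : σ / τ ∈ UHP) (z : ℂ)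
    (h1 : EGFactorsNeZero z τ σ) (h2 : EGFactorsNeZero (z + τ) τ (σ + τ))
    (h3 : EGFactorsNeZero z (τ + σ) σ) :
    ellipticGamma z τ σ = ellipticGamma (z + τ) τ (σ + τ) * ellipticGamma z (τ + σ) σ :=
  ellipticGamma_three_term_general τ σ hτ hσ z h1 h2 h3
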